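/- arXiv:2403.01293 — 3 statements merged into one kernel-verified Lean document; each statement's English description precedes it below -/
import Mathlib

section
/- Let n ≥ 4. Every automorphism f of Γ(n) can be written as f = T_{a,b} ∘ ψ_u ∘ α^i ∘ σ^j for some a, b ∈ ℤ_n, some unit u of ℤ_n, some i ∈ {0,1,2} and some j ∈ {0,1}, and this representation is unique. -/
/-- The connection set `S = {(i,0), (0,i), (i,i) : 1 ≤ i ≤ n-1}` of `ℤ_n × ℤ_n`. -/
def cayS (n : ℕ) : Set (ZMod n × ZMod n) :=
  {p | p ≠ 0 ∧ (p.2 = 0 ∨ p.1 = 0 ∨ p.1 = p.2)}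

/-- The Cayley graph `Γ(n) = Cay(ℤ_n × ℤ_n; S)`. -/
def Gamma (n : ℕ) : SimpleGraph (ZMod n × ZMod n) where
  Adj x y := x ≠ y ∧ x - y ∈ cayS n
  symm := ⟨by
    rintro x y ⟨hxy, hne, h⟩
    refine ⟨Ne.symm hxy, sub_ne_zero_of_ne (Ne.symm hxy), ?_⟩
    simp only [Prod.fst_sub, Prod.snd_sub] at h ⊢
    rcases h with h | h | h
    · exact Or.inl (by linear_combination -h)
    · exact Or.inr (Or.inl (by linear_combination -h))
    · exact Or.inr (Or.inr (by linear_combination -h))⟩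
  loopless := ⟨fun x h => h.1 rfl⟩

/-- `ψ_u : (i,j) ↦ (u·i, u·j)` for a unit `u` of `ℤ_n`. -/
def psiMap (n : ℕ) (u : (ZMod n)ˣ) : ZMod n × ZMod n → ZMod n × ZMod n :=
  fun p => (u * p.1, u * p.2)

/-- `σ : (i,j) ↦ (j,i)`. -/
def sigmaMap (n : ℕ) : ZMod n × ZMod n → ZMod n × ZMod n := fun p => (p.2, p.1)

/-- `α : (i,j) ↦ (-j, i-j)`. -/
def alphaMap (n : ℕ) : ZMod n × ZMod n → ZMod n × ZMod n := fun p => (-p.2, p.1 - p.2)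

/-- The translation `T_{a,b} : (x,y) ↦ (x+a, y+b)`. -/
def tMap (n : ℕ) (a b : ZMod n) : ZMod n × ZMod n → ZMod n × ZMod n :=
  fun p => (p.1 + a, p.2 + b)

/-!
Adjacency in `Γ(n)` means lying on a common row, column or diagonal. A triangle that is not
contained in such a line has at most one common neighbour: it would have to complete the triangle
to a parallelogram whose sides and diagonals are all lines, which forces the edges to be
2-torsion. So collinearity of three vertices is visible in the graph: for `n ≥ 5` a collinear
triangle has two common neighbours, and for `n = 4` it has one and contains an edge lying in a
single 4-clique, while the edges of the parallelogram cliques lie in two. An automorphism,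
translated so as to fix `0`, therefore maps lines to lines and permutes the three line classes;
the six maps `α^i ∘ σ^j` realise all six permutations, and a collineation fixing `0` and
preserving every class has the form `(i, j) ↦ (φ i, φ j)` with `φ` additive, i.e. it is some
`ψ_u`. Uniqueness: the translation is read off at `0`, the permutation of classes determines
`(i, j)`, and then `ψ_u` determines `u`.
-/

namespace ZModGrid

variable {n : ℕ}

/-- The lines of class `k` are the fibres of `lineCoord k`: rows for `k = 0`, columns for `k = 1`,
diagonals for `k = 2`. -/
def lineCoord (k : Fin 3) : ZMod n × ZMod n →ₗ[ZMod n] ZMod n :=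
  ![LinearMap.snd _ _ _, LinearMap.fst _ _ _, LinearMap.fst _ _ _ - LinearMap.snd _ _ _] k

@[simp] lemma lineCoord_zero (p : ZMod n × ZMod n) : lineCoord 0 p = p.2 := rfl
@[simp] lemma lineCoord_one (p : ZMod n × ZMod n) : lineCoord 1 p = p.1 := rfl
@[simp] lemma lineCoord_two (p : ZMod n × ZMod n) : lineCoord 2 p = p.1 - p.2 := rfl

def dir : Fin 3 → ZMod n × ZMod n := ![(1, 0), (0, 1), (1, 1)]

@[simp] lemma lineCoord_dir (k : Fin 3) : lineCoord k (dir k : ZMod n × ZMod n) = 0 := by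
  fin_cases k <;> simp [dir]

lemma dir_ne_zero [Fact (1 < n)] (k : Fin 3) : (dir k : ZMod n × ZMod n) ≠ 0 := by
  fin_cases k <;> simp [dir, Prod.ext_iff]

lemma eq_zero_of_lineCoord_eq_zero {k m : Fin 3} (hkm : k ≠ m) {p : ZMod n × ZMod n}
    (hk : lineCoord k p = 0) (hm : lineCoord m p = 0) : p = 0 := by
  fin_cases k <;> fin_cases m <;> simp_all [Prod.ext_iff, sub_eq_zero]

lemma eq_of_lineCoord_eq {k m : Fin 3} (hkm : k ≠ m) {p q : ZMod n × ZMod n}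
    (hk : lineCoord k p = lineCoord k q) (hm : lineCoord m p = lineCoord m q) : p = q :=
  sub_eq_zero.mp <| eq_zero_of_lineCoord_eq_zero hkm (by rw [map_sub, hk, sub_self])
    (by rw [map_sub, hm, sub_self])

lemma class_eq_of_lineCoord_eq {k m : Fin 3} {p q : ZMod n × ZMod n} (hpq : p ≠ q)
    (hk : lineCoord k p = lineCoord k q) (hm : lineCoord m p = lineCoord m q) : k = m := by
  by_contra hkm
  exact hpq (eq_of_lineCoord_eq hkm hk hm)

lemma class_eq_of_lineCoord_eq_zero {k m : Fin 3} {p : ZMod n × ZMod n} (hp : p ≠ 0)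
    (hk : lineCoord k p = 0) (hm : lineCoord m p = 0) : k = m :=
  class_eq_of_lineCoord_eq hp (by rw [hk, map_zero]) (by rw [hm, map_zero])

lemma exists_eq_add_smul_dir {k : Fin 3} {p q : ZMod n × ZMod n}
    (h : lineCoord k q = lineCoord k p) : ∃ t : ZMod n, q = p + t • dir k := by
  fin_cases k
  · exact ⟨q.1 - p.1, Prod.ext (by simp [dir]) (by simpa [dir] using h)⟩
  · exact ⟨q.2 - p.2, Prod.ext (by simpa [dir] using h) (by simp [dir])⟩
  · refine ⟨q.1 - p.1, Prod.ext (by simp [dir]) ?_⟩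
    change q.1 - q.2 = p.1 - p.2 at h
    simp [dir]
    linear_combination -h


lemma add_smul_dir_injective (k : Fin 3) (p : ZMod n × ZMod n) :
    Function.Injective fun t : ZMod n => p + t • dir k := by
  intro t s h
  fin_cases k <;> simpa [dir] using h

lemma exists_lineCoord_eq_notMem [NeZero n] (s : Finset (ZMod n × ZMod n)) (hs : s.card < n)
    (k : Fin 3) (p : ZMod n × ZMod n) : ∃ q, lineCoord k q = lineCoord k p ∧ q ∉ s := by
  obtain ⟨q, hq, hqs⟩ := Finset.exists_mem_notMem_of_card_lt_card
    (s := s) (t := Finset.univ.image fun t : ZMod n => p + t • dir k)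
    (by rwa [Finset.card_image_of_injective _ (add_smul_dir_injective k p), Finset.card_univ,
      ZMod.card])
  obtain ⟨t, -, rfl⟩ := Finset.mem_image.mp hq
  exact ⟨_, by simp, hqs⟩

lemma exists_lineCoord_eq_of_ne [NeZero n] {k m : Fin 3} (hkm : k ≠ m) (p : ZMod n × ZMod n)
    (v : ZMod n) : ∃ q, lineCoord k q = lineCoord k p ∧ lineCoord m q = v := by
  have hinj : Function.Injective fun t : ZMod n => lineCoord m (p + t • dir k) :=
    fun t s h => add_smul_dir_injective k p (eq_of_lineCoord_eq hkm (by simp) h)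
  obtain ⟨t, ht⟩ := Finite.injective_iff_surjective.mp hinj v
  exact ⟨p + t • dir k, by simp, ht⟩

def Aligned (x y z : ZMod n × ZMod n) : Prop :=
  ∃ k, lineCoord k x = lineCoord k y ∧ lineCoord k x = lineCoord k z

lemma aligned_sub_right {x y z t : ZMod n × ZMod n} :
    Aligned (x - t) (y - t) (z - t) ↔ Aligned x y z := by
  simp [Aligned]

lemma aligned_iff_of_lineCoord_eq {k : Fin 3} {x y z : ZMod n × ZMod n} (hxy : x ≠ y)
    (hk : lineCoord k x = lineCoord k y) : Aligned x y z ↔ lineCoord k x = lineCoord k z :=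
  ⟨fun ⟨_, hm, hmz⟩ => class_eq_of_lineCoord_eq hxy hm hk ▸ hmz, fun h => ⟨k, hk, h⟩⟩

lemma eq_or_pairwise_ne_of_triangle {a b d : Fin 3} {x y z : ZMod n × ZMod n} (hxy : x ≠ y)
    (hxz : x ≠ z) (hyz : y ≠ z) (ha : lineCoord a x = lineCoord a y)
    (hb : lineCoord b y = lineCoord b z) (hd : lineCoord d x = lineCoord d z) :
    (a = b ∧ b = d) ∨ (a ≠ b ∧ b ≠ d ∧ a ≠ d) := by
  by_cases hab : a = b
  · subst hab
    by_cases had : a = d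
    · exact Or.inl ⟨rfl, had⟩
    · exact absurd (eq_of_lineCoord_eq had (ha.trans hb) hd) hxz
  · refine Or.inr ⟨hab, fun hbd => ?_, fun had => ?_⟩
    · subst hbd
      exact hxy (eq_of_lineCoord_eq hab ha (hd.trans hb.symm))
    · subst had
      exact hyz (eq_of_lineCoord_eq hab (ha.symm.trans hd) hb)

def MapsLines (F : ZMod n × ZMod n → ZMod n × ZMod n) (τ : Fin 3 → Fin 3) : Prop :=
  ∀ k p q, lineCoord k p = lineCoord k q → lineCoord (τ k) (F p) = lineCoord (τ k) (F q)

section MapsLines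

variable {F G : ZMod n × ZMod n → ZMod n × ZMod n} {τ ρ : Fin 3 → Fin 3}

lemma MapsLines.comp (hF : MapsLines F τ) (hG : MapsLines G ρ) : MapsLines (F ∘ G) (τ ∘ ρ) :=
  fun k p q h => hF (ρ k) _ _ (hG k p q h)

lemma MapsLines.iterate (hF : MapsLines F τ) : ∀ m : ℕ, MapsLines F^[m] τ^[m]
  | 0 => fun _ _ _ h => h
  | m + 1 => (hF.iterate m).comp hF

lemma MapsLines.eq [Fact (1 < n)] (hF : Function.Injective F) (hτ : MapsLines F τ)
    (hρ : MapsLines F ρ) : τ = ρ := by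
  funext k
  have h : lineCoord k (dir k) = lineCoord k (0 : ZMod n × ZMod n) := by simp
  exact class_eq_of_lineCoord_eq (hF.ne (dir_ne_zero k)) (hτ k _ _ h) (hρ k _ _ h)

end MapsLines

lemma mapsLines_alphaMap : MapsLines (alphaMap n) (· + 1) := by
  intro k p q h
  fin_cases k <;> simp [alphaMap] at h ⊢ <;> grind

lemma mapsLines_sigmaMap : MapsLines (sigmaMap n) (Equiv.swap 0 1) := by
  intro k p q h
  fin_cases k <;> simp [sigmaMap, Equiv.swap_apply_def] at h ⊢ <;> grind

lemma mapsLines_psiMap (u : (ZMod n)ˣ) : MapsLines (psiMap n u) id := by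
  intro k p q h
  change lineCoord k ((u : ZMod n) • p) = lineCoord k ((u : ZMod n) • q)
  rw [map_smul, map_smul, h]

lemma psiMap_injective (u : (ZMod n)ˣ) : Function.Injective (psiMap n u) := by
  intro p q h
  simpa [psiMap, Prod.ext_iff] using h

def axisSymm (n : ℕ) (i : Fin 3) (j : Fin 2) : ZMod n × ZMod n → ZMod n × ZMod n :=
  (alphaMap n)^[i] ∘ (sigmaMap n)^[j]

def axisSymmInv (n : ℕ) (i : Fin 3) (j : Fin 2) : ZMod n × ZMod n → ZMod n × ZMod n :=
  (sigmaMap n)^[j] ∘ (alphaMap n)^[2 * i]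

def axisPerm (i : Fin 3) (j : Fin 2) : Fin 3 → Fin 3 :=
  (· + 1)^[i] ∘ (Equiv.swap (0 : Fin 3) 1)^[j]

lemma mapsLines_axisSymm (i : Fin 3) (j : Fin 2) : MapsLines (axisSymm n i j) (axisPerm i j) :=
  (mapsLines_alphaMap.iterate i).comp (mapsLines_sigmaMap.iterate j)

lemma mapsLines_axisSymmInv (i : Fin 3) (j : Fin 2) :
    MapsLines (axisSymmInv n i j) ((Equiv.swap (0 : Fin 3) 1)^[j] ∘ (· + 1)^[2 * i]) :=
  (mapsLines_sigmaMap.iterate j).comp (mapsLines_alphaMap.iterate (2 * i))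

lemma exists_axisPerm_eq {π : Fin 3 → Fin 3} (hπ : Function.Injective π) :
    ∃ i j, axisPerm i j = π := by
  revert π
  decide

lemma axisPerm_injective {i i' : Fin 3} {j j' : Fin 2} (h : axisPerm i j = axisPerm i' j') :
    i = i' ∧ j = j' := by
  revert i i' j j'
  decide

lemma axisPermInv_comp_axisPerm (i : Fin 3) (j : Fin 2) :
    ((Equiv.swap (0 : Fin 3) 1)^[j] ∘ (· + 1)^[2 * i]) ∘ axisPerm i j = id := by
  revert i j
  decide

lemma alphaMap_iterate_three : (alphaMap n)^[3] = id := by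
  funext p
  ext <;> simp [alphaMap]
  ring

lemma sigmaMap_iterate_two : (sigmaMap n)^[2] = id := rfl

lemma alphaMap_iterate_add_two_mul (i : ℕ) : (alphaMap n)^[i + 2 * i] = id := by
  rw [show i + 2 * i = 3 * i by ring, Function.iterate_mul, alphaMap_iterate_three,
    Function.iterate_id]

lemma sigmaMap_iterate_add_self (j : ℕ) : (sigmaMap n)^[j + j] = id := by
  rw [← two_mul, Function.iterate_mul, sigmaMap_iterate_two, Function.iterate_id]

lemma leftInverse_axisSymm_axisSymmInv (i : Fin 3) (j : Fin 2) :
    Function.LeftInverse (axisSymm n i j) (axisSymmInv n i j) := by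
  refine congrFun (?_ : axisSymm n i j ∘ axisSymmInv n i j = id)
  change (alphaMap n)^[i] ∘ ((sigmaMap n)^[j] ∘ (sigmaMap n)^[j]) ∘ (alphaMap n)^[2 * i] = id
  rw [← Function.iterate_add, sigmaMap_iterate_add_self, Function.id_comp,
    ← Function.iterate_add, alphaMap_iterate_add_two_mul]

lemma leftInverse_axisSymmInv_axisSymm (i : Fin 3) (j : Fin 2) :
    Function.LeftInverse (axisSymmInv n i j) (axisSymm n i j) := by
  refine congrFun (?_ : axisSymmInv n i j ∘ axisSymm n i j = id)
  change (sigmaMap n)^[j] ∘ ((alphaMap n)^[2 * i] ∘ (alphaMap n)^[i]) ∘ (sigmaMap n)^[j] = id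
  rw [← Function.iterate_add, add_comm, alphaMap_iterate_add_two_mul, Function.id_comp,
    ← Function.iterate_add, sigmaMap_iterate_add_self]

lemma axisSymm_zero (i : Fin 3) (j : Fin 2) : axisSymm n i j 0 = 0 := by
  have hα : alphaMap n 0 = 0 := by ext <;> simp [alphaMap]
  have hσ : sigmaMap n 0 = 0 := rfl
  rw [axisSymm, Function.comp_apply, Function.iterate_fixed hσ, Function.iterate_fixed hα]

lemma psiMap_comp_axisSymm (u : (ZMod n)ˣ) (i : Fin 3) (j : Fin 2) :
    psiMap n u ∘ axisSymm n i j = axisSymm n i j ∘ psiMap n u := by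
  have hα : Function.Commute (psiMap n u) (alphaMap n) := fun p => by
    simp only [psiMap, alphaMap, Prod.mk.injEq]
    constructor <;> ring
  have hσ : Function.Commute (psiMap n u) (sigmaMap n) := fun _ => rfl
  exact Function.Semiconj.comp_eq ((hα.iterate_right i).comp_right (hσ.iterate_right j))

lemma exists_mapsTo_line (hn : 3 ≤ n) {F : ZMod n × ZMod n → ZMod n × ZMod n}
    (hF : Function.Injective F)
    (hal : ∀ x y z, x ≠ y → x ≠ z → y ≠ z → Aligned x y z → Aligned (F x) (F y) (F z))
    (k : Fin 3) (p : ZMod n × ZMod n) :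
    ∃ k', ∀ r, lineCoord k r = lineCoord k p → lineCoord k' (F r) = lineCoord k' (F p) := by
  have : Fact (1 < n) := ⟨by omega⟩
  set q := p + (1 : ZMod n) • dir k
  have hpq : p ≠ q := fun h => dir_ne_zero k (by simpa [q] using h)
  have hq : lineCoord k p = lineCoord k q := by simp [q]
  obtain ⟨r₀, hr₀, hr₀s⟩ :=
    exists_lineCoord_eq_notMem {p, q} (Finset.card_le_two.trans_lt (by omega)) k p
  simp only [Finset.mem_insert, Finset.mem_singleton, not_or] at hr₀s
  obtain ⟨k', hk', -⟩ := hal p q r₀ hpq (Ne.symm hr₀s.1) (Ne.symm hr₀s.2) ⟨k, hq, hr₀.symm⟩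
  refine ⟨k', fun r hr => ?_⟩
  by_cases hrp : r = p
  · rw [hrp]
  by_cases hrq : r = q
  · rw [hrq, hk']
  obtain ⟨k'', hk'', hr⟩ := hal p q r hpq (Ne.symm hrp) (Ne.symm hrq) ⟨k, hq, hr.symm⟩
  rw [class_eq_of_lineCoord_eq (hF.ne hpq) hk' hk'', hr]

lemma exists_perm_axes [Fact (1 < n)] (hn : 3 ≤ n)
    (e : ZMod n × ZMod n ≃ ZMod n × ZMod n) (he0 : e 0 = 0)
    (he : ∀ x y z, x ≠ y → x ≠ z → y ≠ z → (Aligned (e x) (e y) (e z) ↔ Aligned x y z)) :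
    ∃ π : Fin 3 → Fin 3, Function.Injective π ∧
      ∀ k p, lineCoord k p = 0 ↔ lineCoord (π k) (e p) = 0 := by
  have axes : ∀ F : ZMod n × ZMod n ≃ ZMod n × ZMod n, F 0 = 0 →
      (∀ x y z, x ≠ y → x ≠ z → y ≠ z → Aligned x y z → Aligned (F x) (F y) (F z)) →
      ∀ k, ∃ k', ∀ p, lineCoord k p = 0 → lineCoord k' (F p) = 0 := by
    intro F hF0 hF k
    obtain ⟨k', hk'⟩ := exists_mapsTo_line hn F.injective hF k 0
    exact ⟨k', fun p hp => by simpa [hF0] using hk' p (by simpa using hp)⟩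
  choose π hπ using axes e he0 fun x y z hxy hxz hyz => (he x y z hxy hxz hyz).2
  choose π' hπ' using axes e.symm (e.symm_apply_eq.mpr he0.symm) fun x y z hxy hxz hyz h =>
    (he _ _ _ (e.symm.injective.ne hxy) (e.symm.injective.ne hxz) (e.symm.injective.ne hyz)).1
      (by simpa using h)
  have hπ'π : ∀ k, π' (π k) = k := fun k =>
    class_eq_of_lineCoord_eq_zero (dir_ne_zero k)
      (by simpa using hπ' _ _ (hπ k _ (lineCoord_dir k))) (lineCoord_dir k)
  refine ⟨π, fun a b h => by rw [← hπ'π a, h, hπ'π b], fun k p => ⟨hπ k p, fun h => ?_⟩⟩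
  simpa [hπ'π] using hπ' (π k) (e p) h

lemma mapsLines_of_axes [Fact (1 < n)] {F : ZMod n × ZMod n → ZMod n × ZMod n}
    {π : Fin 3 → Fin 3} (hπ : Function.Injective π)
    (hax : ∀ k p, lineCoord k p = 0 ↔ lineCoord (π k) (F p) = 0)
    (hline : ∀ k p, ∃ k', ∀ r, lineCoord k r = lineCoord k p →
      lineCoord k' (F r) = lineCoord k' (F p)) :
    MapsLines F π := by
  intro k p q hpq
  obtain ⟨k', hk'⟩ := hline k p
  suffices k' = π k from this ▸ (hk' q hpq.symm).symm
  by_contra hne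
  obtain ⟨m, rfl⟩ := Finite.injective_iff_surjective.mp hπ k'
  have hkm : k ≠ m := fun h => hne (h ▸ rfl)
  -- the line through `p` meets the axis of class `m`, so `F` would map it into that axis
  obtain ⟨s, hs, hs0⟩ := exists_lineCoord_eq_of_ne hkm p 0
  have hax_m : ∀ r, lineCoord k r = lineCoord k p → lineCoord m r = 0 := fun r hr =>
    (hax m r).2 ((hk' r hr).trans ((hk' s hs).symm.trans ((hax m s).1 hs0)))
  have hp : p + (1 : ZMod n) • dir k = p :=
    eq_of_lineCoord_eq hkm (by simp) ((hax_m _ (by simp)).trans (hax_m p rfl).symm)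
  exact dir_ne_zero k (by simpa using hp)

lemma exists_eq_psiMap [NeZero n] {g : ZMod n × ZMod n → ZMod n × ZMod n}
    (hg : Function.Surjective g) (hg0 : g 0 = 0) (hgl : MapsLines g id) :
    ∃ u : (ZMod n)ˣ, g = psiMap n u := by
  set φ : ZMod n → ZMod n := fun i => (g (i, 0)).1
  have hfst : ∀ p, (g p).1 = φ p.1 := fun p => hgl 1 p (p.1, 0) rfl
  have hsnd : ∀ p, (g p).2 = φ p.2 := fun p => by
    have hrow : (g p).2 = (g (p.2, p.2)).2 := hgl 0 p (p.2, p.2) rfl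
    have hdiag : lineCoord 2 (g (p.2, p.2)) = lineCoord 2 (g 0) :=
      hgl 2 (p.2, p.2) 0 (by simp)
    rw [hg0, map_zero, lineCoord_two, sub_eq_zero] at hdiag
    rw [hrow, ← hdiag, hfst]
  have hφ0 : φ 0 = 0 := congrArg Prod.fst hg0
  have hsub : ∀ a b, φ (a - b) = φ a - φ b := fun a b => by
    have h := hgl 2 (a, b) (a - b, 0) (by simp)
    simp only [id, lineCoord_two, hfst, hsnd, hφ0, sub_zero] at h
    exact h.symm
  have hmul : ∀ a, φ a = a * φ 1 := fun a => by
    simpa [nsmul_eq_mul] using map_nsmul (AddMonoidHom.ofMapSub φ hsub) a.val 1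
  obtain ⟨p, hp⟩ := hg (1, 0)
  have hunit : φ 1 * p.1 = 1 := by rw [mul_comm, ← hmul, ← hfst, hp]
  obtain ⟨u, hu⟩ := IsUnit.of_mul_eq_one _ hunit
  refine ⟨u, funext fun p => Prod.ext ?_ ?_⟩
  · rw [hfst, hmul, ← hu, mul_comm]; rfl
  · rw [hsnd, hmul, ← hu, mul_comm]; rfl

theorem exists_eq_psiMap_comp_axisSymm (hn : 3 ≤ n) (e : ZMod n × ZMod n ≃ ZMod n × ZMod n)
    (he0 : e 0 = 0)
    (he : ∀ x y z, x ≠ y → x ≠ z → y ≠ z → (Aligned (e x) (e y) (e z) ↔ Aligned x y z)) :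
    ∃ (u : (ZMod n)ˣ) (i : Fin 3) (j : Fin 2), ⇑e = psiMap n u ∘ axisSymm n i j := by
  have : Fact (1 < n) := ⟨by omega⟩
  obtain ⟨π, hπ, hax⟩ := exists_perm_axes hn e he0 he
  have he_lines : MapsLines e π := mapsLines_of_axes hπ hax
    (exists_mapsTo_line hn e.injective fun x y z hxy hxz hyz => (he x y z hxy hxz hyz).2)
  obtain ⟨i, j, rfl⟩ := exists_axisPerm_eq hπ
  have hg : MapsLines (axisSymmInv n i j ∘ e) id := by
    have h := (mapsLines_axisSymmInv i j).comp he_lines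
    rwa [axisPermInv_comp_axisPerm] at h
  have hg0 : axisSymmInv n i j (e 0) = 0 := by
    simpa [he0, axisSymm_zero] using leftInverse_axisSymmInv_axisSymm (n := n) i j 0
  obtain ⟨u, hu⟩ := exists_eq_psiMap
    ((leftInverse_axisSymmInv_axisSymm i j).surjective.comp e.surjective) hg0 hg
  refine ⟨u, i, j, ?_⟩
  calc ⇑e = axisSymm n i j ∘ (axisSymmInv n i j ∘ e) := by
        rw [← Function.comp_assoc, (leftInverse_axisSymm_axisSymmInv i j).comp_eq_id,
          Function.id_comp]
    _ = psiMap n u ∘ axisSymm n i j := by rw [hu, psiMap_comp_axisSymm]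

lemma tMap_comp_psiMap_comp_axisSymm_injective [Fact (1 < n)] :
    Function.Injective fun t : (ZMod n × ZMod n) × (ZMod n)ˣ × Fin 3 × Fin 2 =>
      tMap n t.1.1 t.1.2 ∘ psiMap n t.2.1 ∘ axisSymm n t.2.2.1 t.2.2.2 := by
  rintro ⟨⟨a, b⟩, u, i, j⟩ ⟨⟨a', b'⟩, u', i', j'⟩ h
  have hab : (a, b) = (a', b') := by
    simpa [tMap, psiMap, axisSymm_zero] using congrFun h 0
  obtain ⟨rfl, rfl⟩ := Prod.mk.inj hab
  have h' : psiMap n u ∘ axisSymm n i j = psiMap n u' ∘ axisSymm n i' j' :=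
    funext fun p => by simpa [tMap, Prod.ext_iff] using congrFun h p
  have hinj : Function.Injective (psiMap n u ∘ axisSymm n i j) :=
    (psiMap_injective u).comp (leftInverse_axisSymmInv_axisSymm i j).injective
  have hperm : axisPerm i j = axisPerm i' j' := MapsLines.eq hinj
    ((mapsLines_psiMap u).comp (mapsLines_axisSymm i j))
    (by rw [h']; exact (mapsLines_psiMap u').comp (mapsLines_axisSymm i' j'))
  obtain ⟨rfl, rfl⟩ := axisPerm_injective hperm
  have hu : psiMap n u = psiMap n u' :=
    (leftInverse_axisSymm_axisSymmInv i j).surjective.injective_comp_right h'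
  have := congrFun hu (1, 0)
  simp only [psiMap, mul_one, mul_zero, Prod.mk.injEq, and_true] at this
  rw [Units.ext this]

end ZModGrid

namespace SimpleGraph

variable {V W : Type*} (G : SimpleGraph V)

def IsClique4 (a b c d : V) : Prop :=
  G.Adj a b ∧ G.Adj a c ∧ G.Adj a d ∧ G.Adj b c ∧ G.Adj b d ∧ G.Adj c d

def IsPureEdge (a b : V) : Prop :=
  G.Adj a b ∧ ∀ c d c' d', G.IsClique4 a b c d → G.IsClique4 a b c' d' →
    (c = c' ∧ d = d') ∨ (c = d' ∧ d = c')

/-- A graph-theoretic stand-in for collinearity in `Γ(n)`: a triangle with a second common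
neighbour detects lines when `n ≥ 5`, one with a pure edge when `n = 4`. -/
def IsLineTriple (x y z : V) : Prop :=
  ∃ w w', G.IsClique4 x y z w ∧ G.IsClique4 x y z w' ∧
    (w ≠ w' ∨ G.IsPureEdge x y ∨ G.IsPureEdge x z ∨ G.IsPureEdge y z)

variable {G} {H : SimpleGraph W} (f : G ≃g H)

lemma Iso.isClique4_iff {a b c d : V} :
    H.IsClique4 (f a) (f b) (f c) (f d) ↔ G.IsClique4 a b c d := by
  simp only [IsClique4, f.map_adj_iff]

lemma IsPureEdge.map {a b : V} (h : G.IsPureEdge a b) : H.IsPureEdge (f a) (f b) := by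
  refine ⟨f.map_adj_iff.2 h.1, fun c d c' d' hc hc' => ?_⟩
  obtain ⟨c, rfl⟩ := f.surjective c
  obtain ⟨d, rfl⟩ := f.surjective d
  obtain ⟨c', rfl⟩ := f.surjective c'
  obtain ⟨d', rfl⟩ := f.surjective d'
  simpa using h.2 c d c' d' (f.isClique4_iff.1 hc) (f.isClique4_iff.1 hc')

lemma IsLineTriple.map {x y z : V} (h : G.IsLineTriple x y z) :
    H.IsLineTriple (f x) (f y) (f z) := by
  obtain ⟨w, w', hw, hw', hor⟩ := h
  refine ⟨f w, f w', f.isClique4_iff.2 hw, f.isClique4_iff.2 hw', ?_⟩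
  rcases hor with hne | h | h | h
  · exact Or.inl (f.injective.ne hne)
  · exact Or.inr (Or.inl (h.map f))
  · exact Or.inr (Or.inr (Or.inl (h.map f)))
  · exact Or.inr (Or.inr (Or.inr (h.map f)))

lemma Iso.isLineTriple_iff {x y z : V} :
    H.IsLineTriple (f x) (f y) (f z) ↔ G.IsLineTriple x y z :=
  ⟨fun h => by simpa using h.map f.symm, fun h => h.map f⟩

end SimpleGraph

namespace Gamma

open ZModGrid SimpleGraph

variable {n : ℕ} {x y z w : ZMod n × ZMod n}

lemma adj_iff : (Gamma n).Adj x y ↔ x ≠ y ∧ ∃ k, lineCoord k x = lineCoord k y := by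
  simp [Gamma, cayS, Fin.exists_fin_succ, sub_eq_zero, sub_eq_sub_iff_sub_eq_sub]

lemma adj_of_lineCoord_eq {k : Fin 3} (hxy : x ≠ y) (h : lineCoord k x = lineCoord k y) :
    (Gamma n).Adj x y :=
  adj_iff.2 ⟨hxy, k, h⟩

lemma isClique4_of_lineCoord_eq {k : Fin 3} (hxy : x ≠ y) (hxz : x ≠ z) (hxw : x ≠ w)
    (hyz : y ≠ z) (hyw : y ≠ w) (hzw : z ≠ w) (hy : lineCoord k y = lineCoord k x)
    (hz : lineCoord k z = lineCoord k x) (hw : lineCoord k w = lineCoord k x) :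
    (Gamma n).IsClique4 x y z w :=
  ⟨adj_of_lineCoord_eq hxy hy.symm, adj_of_lineCoord_eq hxz hz.symm,
    adj_of_lineCoord_eq hxw hw.symm, adj_of_lineCoord_eq hyz (hy.trans hz.symm),
    adj_of_lineCoord_eq hyw (hy.trans hw.symm), adj_of_lineCoord_eq hzw (hz.trans hw.symm)⟩

lemma eq_add_sub_of_isClique4 (hc : (Gamma n).IsClique4 x y z w) (hxyz : ¬Aligned x y z) :
    w = y + z - x ∧ (2 : ZMod n) • (y - x) = 0 := by
  obtain ⟨hxy, hxz, hxw, hyz, hyw, hzw⟩ := hc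
  obtain ⟨hxy, a, ha⟩ := adj_iff.1 hxy
  obtain ⟨hxz, d, hd⟩ := adj_iff.1 hxz
  obtain ⟨hyz, b, hb⟩ := adj_iff.1 hyz
  obtain ⟨hwx, p, hp⟩ := adj_iff.1 hxw.symm
  obtain ⟨hwy, q, hq⟩ := adj_iff.1 hyw.symm
  obtain ⟨hwz, r, hr⟩ := adj_iff.1 hzw.symm
  obtain ⟨hab, hbd, had⟩ := (eq_or_pairwise_ne_of_triangle hxy hxz hyz ha hb hd).resolve_left
    fun ⟨hab, hbd⟩ => hxyz ⟨a, ha, hab ▸ hbd ▸ hd⟩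
  -- each side through `w` is parallel to the opposite side of the triangle `x y z`
  obtain ⟨rfl, rfl, rfl⟩ : p = b ∧ q = d ∧ r = a :=
    (by decide : ∀ a b d p q r : Fin 3, a ≠ b → b ≠ d → a ≠ d →
      ((p = a ∧ a = q) ∨ (p ≠ a ∧ a ≠ q ∧ p ≠ q)) →
      ((q = b ∧ b = r) ∨ (q ≠ b ∧ b ≠ r ∧ q ≠ r)) →
      ((p = d ∧ d = r) ∨ (p ≠ d ∧ d ≠ r ∧ p ≠ r)) → p = b ∧ q = d ∧ r = a)
    a b d p q r hab hbd had
    (eq_or_pairwise_ne_of_triangle hwx hwy hxy hp ha hq)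
    (eq_or_pairwise_ne_of_triangle hwy hwz hyz hq hb hr)
    (eq_or_pairwise_ne_of_triangle hwx hwz hxz hp hd hr)
  have hw : w = y + z - x := eq_of_lineCoord_eq had
    (by rw [hr, map_sub, map_add, ha]; ring) (by rw [hq, map_sub, map_add, hd]; ring)
  refine ⟨hw, eq_zero_of_lineCoord_eq_zero hab ?_ ?_⟩
  · rw [map_smul, map_sub, ha, sub_self, smul_zero]
  · rw [hw, map_sub, map_add] at hp
    rw [map_smul, map_sub, smul_eq_mul]
    linear_combination hp + hb

lemma aligned_of_isPureEdge (hn : 4 ≤ n) (hxy : (Gamma n).IsPureEdge x y)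
    (hc : (Gamma n).IsClique4 x y z w) : Aligned x y z := by
  have : NeZero n := ⟨by omega⟩
  obtain ⟨hne, k, hk⟩ := adj_iff.1 hxy.1
  obtain ⟨c, hc', hcs⟩ :=
    exists_lineCoord_eq_notMem {x, y} (Finset.card_le_two.trans_lt (by omega)) k x
  obtain ⟨d, hd', hds⟩ :=
    exists_lineCoord_eq_notMem {x, y, c} (Finset.card_le_three.trans_lt (by omega)) k x
  simp only [Finset.mem_insert, Finset.mem_singleton, not_or] at hcs hds
  have hline : (Gamma n).IsClique4 x y c d := isClique4_of_lineCoord_eq hne (Ne.symm hcs.1)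
    (Ne.symm hds.1) (Ne.symm hcs.2) (Ne.symm hds.2.1) (Ne.symm hds.2.2) hk.symm hc' hd'
  refine ⟨k, hk, ?_⟩
  rcases hxy.2 z w c d hc hline with ⟨rfl, -⟩ | ⟨rfl, -⟩
  · exact hc'.symm
  · exact hd'.symm

lemma isPureEdge_add_smul_dir {k : Fin 3} {t : ZMod 4} (ht : 2 * t ≠ 0) (x : ZMod 4 × ZMod 4) :
    (Gamma 4).IsPureEdge x (x + t • dir k) := by
  have ht0 : t ≠ 0 := by rintro rfl; simp at ht
  have hxy : x ≠ x + t • dir k := fun h =>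
    ht0 (add_smul_dir_injective k x (by simpa using h.symm))
  have hk : lineCoord k x = lineCoord k (x + t • dir k) := by simp
  -- as `2 * t ≠ 0`, a 4-clique through the edge is no parallelogram clique, so it lies on the
  -- line of the edge, which has just two more points
  have onLine : ∀ c d, (Gamma 4).IsClique4 x (x + t • dir k) c d →
      ∃ r, c = x + r • dir k ∧ r ≠ 0 ∧ r ≠ t := by
    intro c d hc
    have hline : lineCoord k c = lineCoord k x := by
      by_contra hcx
      have hxyc : ¬Aligned x (x + t • dir k) c := fun h =>
        hcx ((aligned_iff_of_lineCoord_eq hxy hk).1 h).symm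
      have h2 := (eq_add_sub_of_isClique4 hc hxyc).2
      rw [add_sub_cancel_left, smul_smul] at h2
      exact ht (add_smul_dir_injective k 0 (by simpa using h2))
    obtain ⟨r, rfl⟩ := exists_eq_add_smul_dir hline
    exact ⟨r, rfl, fun h => hc.2.1.ne (by simp [h]), fun h => hc.2.2.2.1.ne (by rw [h])⟩
  have swap : ∀ {c d}, (Gamma 4).IsClique4 x (x + t • dir k) c d →
      (Gamma 4).IsClique4 x (x + t • dir k) d c :=
    fun ⟨h₁, h₂, h₃, h₄, h₅, h₆⟩ => ⟨h₁, h₃, h₂, h₅, h₄, h₆.symm⟩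
  refine ⟨adj_of_lineCoord_eq hxy hk, fun c d c' d' hc hc' => ?_⟩
  have hd := hc.2.2.2.2.2.ne
  have hd' := hc'.2.2.2.2.2.ne
  obtain ⟨r, hr, hr0, hrt⟩ := onLine c d hc
  obtain ⟨r', hr', hr'0, hr't⟩ := onLine d c (swap hc)
  obtain ⟨q, hq, hq0, hqt⟩ := onLine c' d' hc'
  obtain ⟨q', hq', hq'0, hq't⟩ := onLine d' c' (swap hc')
  subst hr hr' hq hq'
  rcases (by decide : ∀ t r r' q q' : ZMod 4, t ≠ 0 → r ≠ 0 → r ≠ t → r' ≠ 0 → r' ≠ t →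
      r ≠ r' → q ≠ 0 → q ≠ t → q' ≠ 0 → q' ≠ t → q ≠ q' → (r = q ∧ r' = q') ∨ (r = q' ∧ r' = q))
    t r r' q q' ht0 hr0 hrt hr'0 hr't (fun h => hd (by rw [h])) hq0 hqt hq'0 hq't
    (fun h => hd' (by rw [h])) with ⟨rfl, rfl⟩ | ⟨rfl, rfl⟩
  · exact Or.inl ⟨rfl, rfl⟩
  · exact Or.inr ⟨rfl, rfl⟩

lemma isLineTriple_iff (hn : 4 ≤ n) :
    (Gamma n).IsLineTriple x y z ↔ x ≠ y ∧ x ≠ z ∧ y ≠ z ∧ Aligned x y z := by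
  constructor
  · rintro ⟨w, w', hw, hw', hor⟩
    obtain ⟨hxy, hxz, hxw, hyz, hyw, hzw⟩ := hw
    refine ⟨hxy.ne, hxz.ne, hyz.ne, ?_⟩
    by_contra hxyz
    rcases hor with hne | h | h | h
    · exact hne ((eq_add_sub_of_isClique4 ⟨hxy, hxz, hxw, hyz, hyw, hzw⟩ hxyz).1.trans
        (eq_add_sub_of_isClique4 hw' hxyz).1.symm)
    · exact hxyz (aligned_of_isPureEdge hn h ⟨hxy, hxz, hxw, hyz, hyw, hzw⟩)
    · obtain ⟨k, hk, hk'⟩ := aligned_of_isPureEdge hn h ⟨hxz, hxy, hxw, hyz.symm, hzw, hyw⟩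
      exact hxyz ⟨k, hk', hk⟩
    · obtain ⟨k, hk, hk'⟩ := aligned_of_isPureEdge hn h ⟨hyz, hxy.symm, hyw, hxz.symm, hzw, hxw⟩
      exact hxyz ⟨k, hk'.symm, hk'.symm.trans hk⟩
  · rintro ⟨hxy, hxz, hyz, k, hy, hz⟩
    have : NeZero n := ⟨by omega⟩
    have hclique : ∀ v, lineCoord k v = lineCoord k x → v ≠ x → v ≠ y → v ≠ z →
        (Gamma n).IsClique4 x y z v := fun v hv hvx hvy hvz =>
      isClique4_of_lineCoord_eq hxy hxz (Ne.symm hvx) hyz (Ne.symm hvy) (Ne.symm hvz)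
        hy.symm hz.symm hv
    obtain ⟨w, hw, hws⟩ :=
      exists_lineCoord_eq_notMem {x, y, z} (Finset.card_le_three.trans_lt (by omega)) k x
    simp only [Finset.mem_insert, Finset.mem_singleton, not_or] at hws
    rcases hn.lt_or_eq with hn5 | rfl
    · obtain ⟨w', hw', hw's⟩ :=
        exists_lineCoord_eq_notMem {x, y, z, w} (Finset.card_le_four.trans_lt hn5) k x
      simp only [Finset.mem_insert, Finset.mem_singleton, not_or] at hw's
      exact ⟨w, w', hclique w hw hws.1 hws.2.1 hws.2.2,
        hclique w' hw' hw's.1 hw's.2.1 hw's.2.2.1, Or.inl (Ne.symm hw's.2.2.2)⟩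
    · refine ⟨w, w, hclique w hw hws.1 hws.2.1 hws.2.2, hclique w hw hws.1 hws.2.1 hws.2.2,
        Or.inr ?_⟩
      obtain ⟨t, rfl⟩ := exists_eq_add_smul_dir hy.symm
      obtain ⟨s, rfl⟩ := exists_eq_add_smul_dir hz.symm
      have hst : x + s • dir k = x + t • dir k + (s - t) • dir k := by
        rw [add_assoc, ← add_smul, add_sub_cancel]
      rcases (by decide : ∀ t s : ZMod 4, t ≠ 0 → s ≠ 0 → t ≠ s →
          2 * t ≠ 0 ∨ 2 * s ≠ 0 ∨ 2 * (s - t) ≠ 0)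
        t s (fun h => hxy (by simp [h])) (fun h => hxz (by simp [h])) (fun h => hyz (by rw [h]))
        with h | h | h
      · exact Or.inl (isPureEdge_add_smul_dir h x)
      · exact Or.inr (Or.inl (isPureEdge_add_smul_dir h x))
      · exact Or.inr (Or.inr (hst ▸ isPureEdge_add_smul_dir h _))

lemma aligned_map_iff (hn : 4 ≤ n) (f : Gamma n ≃g Gamma n) (hxy : x ≠ y) (hxz : x ≠ z)
    (hyz : y ≠ z) : Aligned (f x) (f y) (f z) ↔ Aligned x y z := by
  simpa [isLineTriple_iff hn, hxy, hxz, hyz] using f.isLineTriple_iff (x := x) (y := y) (z := z)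

end Gamma

open ZModGrid

/-- Every automorphism of `Γ(n)` is uniquely
`T_{a,b} ∘ ψ_u ∘ α^i ∘ σ^j` with `a, b ∈ ℤ_n`, `u` a unit of `ℤ_n`,
`i ∈ {0,1,2}`, `j ∈ {0,1}`. -/
theorem Gamma_aut_decomposition (n : ℕ) (hn : 4 ≤ n) :
    ∀ f : Gamma n ≃g Gamma n,
      ∃! t : (ZMod n × ZMod n) × (ZMod n)ˣ × Fin 3 × Fin 2,
        ⇑f = tMap n t.1.1 t.1.2 ∘ psiMap n t.2.1 ∘
          (alphaMap n)^[(t.2.2.1 : ℕ)] ∘ (sigmaMap n)^[(t.2.2.2 : ℕ)] := by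
  intro f
  have : Fact (1 < n) := ⟨by omega⟩
  let e := f.toEquiv.trans (Equiv.subRight (f 0))
  have he : ∀ x y z, x ≠ y → x ≠ z → y ≠ z → (Aligned (e x) (e y) (e z) ↔ Aligned x y z) :=
    fun x y z hxy hxz hyz => aligned_sub_right.trans (Gamma.aligned_map_iff hn f hxy hxz hyz)
  obtain ⟨u, i, j, hu⟩ := exists_eq_psiMap_comp_axisSymm (by omega) e (sub_self _) he
  have hf : ⇑f = tMap n (f 0).1 (f 0).2 ∘ psiMap n u ∘ axisSymm n i j := by
    funext p
    rw [Function.comp_apply, ← congrFun hu p]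
    simp [e, tMap]
  exact ⟨(f 0, u, i, j), hf, fun t ht =>
    tMap_comp_psiMap_comp_axisSymm_injective (ht.symm.trans hf)⟩
end

section
/- Let n ≥ 4 be composite and let m be a divisor of n with 1 < m < n. Then the pairs {(0,0),(m,0)} and {(0,0),(1,1)} are both edges of Γ(n), but there is no automorphism f of Γ(n) with {f(0,0), f(m,0)} = {(0,0),(1,1)}. -/
/-!
Call a common neighbour `u` of an edge `xy` an *apex* of `xy` if at most one common neighbour
of `x` and `y` is adjacent to `u`. For `n ≥ 5` the common neighbours of an edge `{x, x + s}`
are the `n - 2` further points of the line through `x` in direction `s`, each adjacent to the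
`n - 3 ≥ 2` others, and two apexes; for `s = (t, 0)` these are `x + (t, t)` and `x + (0, -t)`.
The translations and the maps `(a, b) ↦ (b, a)`, `(a, b) ↦ (a, a - b)` are automorphisms
permuting the three directions, so the other edges reduce to this case.
Automorphisms preserve apexes, hence the closure of a set under adding apexes of its edges.
From `{0, (1, 1)}` this closure is everything, while from `{0, (m, 0)}` it stays inside the
proper subgroup `mℤ_n × mℤ_n`.
For `n = 4` every common neighbour is an apex in this sense; there the common neighbours of
`{0, (2, 0)}` are matched by edges, while `(1, 0)` is a common neighbour of `{0, (1, 1)}`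
adjacent to no other one.
-/

lemma Finset.exists_pair_notMem {α : Type*} [Fintype α] [DecidableEq α] (s : Finset α)
    (h : s.card + 2 ≤ Fintype.card α) : ∃ d ∉ s, ∃ e ∉ s, d ≠ e := by
  obtain ⟨d, hd, e, he, hde⟩ :=
    Finset.one_lt_card.1 (by rw [Finset.card_compl]; omega : 1 < sᶜ.card)
  exact ⟨d, by simpa using hd, e, by simpa using he, hde⟩

lemma ZMod.prod_induction {n : ℕ} [NeZero n] {P : ZMod n × ZMod n → Prop} (h0 : P 0)
    (h10 : ∀ x, P x → P (x + (1, 0))) (h01 : ∀ x, P x → P (x + (0, 1))) (z : ZMod n × ZMod n) :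
    P z := by
  obtain ⟨a', b'⟩ := z
  obtain ⟨a, rfl⟩ := ZMod.natCast_zmod_surjective a'
  obtain ⟨b, rfl⟩ := ZMod.natCast_zmod_surjective b'
  induction b with
  | zero =>
    induction a with
    | zero => simpa only [Nat.cast_zero, Prod.mk_zero_zero] using h0
    | succ a ih => simpa using h10 _ ih
  | succ b ih => simpa using h01 _ ih

lemma ZMod.one_notMem_zmultiples_natCast {n m : ℕ} (hdvd : m ∣ n) (hm : 1 < m) :
    (1 : ZMod n) ∉ AddSubgroup.zmultiples (m : ZMod n) := by
  have : Fact (1 < m) := ⟨hm⟩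
  rintro ⟨k, hk⟩
  have h := congrArg (ZMod.castHom hdvd (ZMod m)) hk
  simp only [map_zsmul, map_natCast, ZMod.natCast_self, smul_zero, map_one] at h
  exact zero_ne_one h

namespace SimpleGraph

variable {V W : Type*} {G : SimpleGraph V} {G' : SimpleGraph W}

def IsApex (G : SimpleGraph V) (x y u : V) : Prop :=
  G.Adj x y ∧ u ∈ G.commonNeighbors x y ∧
    (G.neighborSet u ∩ G.commonNeighbors x y).Subsingleton

inductive apexClosure (G : SimpleGraph V) (s : Set V) : Set V
  | mem {x : V} : x ∈ s → apexClosure G s x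
  | apex {x y u : V} : apexClosure G s x → apexClosure G s y → G.IsApex x y u →
      apexClosure G s u

lemma subset_apexClosure (s : Set V) : s ⊆ G.apexClosure s := fun _ => .mem

lemma apexClosure_subset {s T : Set V} (hs : s ⊆ T)
    (hT : ∀ ⦃x y u⦄, x ∈ T → y ∈ T → G.IsApex x y u → u ∈ T) : G.apexClosure s ⊆ T := by
  intro z hz
  induction hz with
  | mem hx => exact hs hx
  | apex _ _ h hx hy => exact hT hx hy h

def TrianglesExtendToK4 (G : SimpleGraph V) (x y : V) : Prop :=
  ∀ u ∈ G.commonNeighbors x y, ∃ v ∈ G.commonNeighbors x y, G.Adj u v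

lemma TrianglesExtendToK4.symm {x y : V} (h : G.TrianglesExtendToK4 x y) :
    G.TrianglesExtendToK4 y x := by
  rwa [TrianglesExtendToK4, commonNeighbors_symm]

namespace Iso

lemma map_mem_commonNeighbors_iff (f : G ≃g G') {x y u : V} :
    f u ∈ G'.commonNeighbors (f x) (f y) ↔ u ∈ G.commonNeighbors x y := by
  simp [mem_commonNeighbors, f.map_adj_iff]

lemma isApex (f : G ≃g G') {x y u : V} (h : G.IsApex x y u) :
    G'.IsApex (f x) (f y) (f u) := by
  obtain ⟨hxy, hu, hsub⟩ := h
  refine ⟨f.map_adj_iff.2 hxy, f.map_mem_commonNeighbors_iff.2 hu, ?_⟩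
  have pullback : ∀ {v}, v ∈ G'.neighborSet (f u) ∩ G'.commonNeighbors (f x) (f y) →
      f.symm v ∈ G.neighborSet u ∩ G.commonNeighbors x y := by
    intro v hv
    simpa [mem_commonNeighbors, ← f.map_adj_iff] using hv
  intro v hv w hw
  simpa using congrArg f (hsub (pullback hv) (pullback hw))

lemma isApex_iff (f : G ≃g G') {x y u : V} :
    G'.IsApex (f x) (f y) (f u) ↔ G.IsApex x y u :=
  ⟨fun h => by simpa using f.symm.isApex h, f.isApex⟩

lemma image_apexClosure (f : G ≃g G') (s : Set V) :
    f '' G.apexClosure s = G'.apexClosure (f '' s) := by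
  refine (Set.image_subset_iff.2 <| apexClosure_subset
    (Set.image_subset_iff.1 (subset_apexClosure _))
    fun x y u hx hy h => .apex hx hy (f.isApex h)).antisymm
    (apexClosure_subset (Set.image_mono (subset_apexClosure _)) ?_)
  rintro _ _ u ⟨x, hx, rfl⟩ ⟨y, hy, rfl⟩ h
  rw [← f.apply_symm_apply u, f.isApex_iff] at h
  exact ⟨_, .apex hx hy h, f.apply_symm_apply u⟩

lemma trianglesExtendToK4 (f : G ≃g G') {x y : V} (h : G.TrianglesExtendToK4 x y) :
    G'.TrianglesExtendToK4 (f x) (f y) := by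
  intro u hu
  rw [← f.apply_symm_apply u, f.map_mem_commonNeighbors_iff] at hu
  obtain ⟨v, hv, huv⟩ := h _ hu
  exact ⟨f v, f.map_mem_commonNeighbors_iff.2 hv, by simpa using f.map_adj_iff.2 huv⟩

end Iso

end SimpleGraph

open SimpleGraph

namespace Gamma

variable {n : ℕ}

lemma adj_iff_sub_mem {x y : ZMod n × ZMod n} : (Gamma n).Adj x y ↔ x - y ∈ cayS n :=
  ⟨And.right, fun h => ⟨sub_ne_zero.1 h.1, h⟩⟩

lemma adj_iff_s13 {x y : ZMod n × ZMod n} :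
    (Gamma n).Adj x y ↔ x ≠ y ∧ (x.2 = y.2 ∨ x.1 = y.1 ∨ x.1 - y.1 = x.2 - y.2) := by
  simp [adj_iff_sub_mem, cayS, sub_eq_zero]

instance : DecidableRel (Gamma n).Adj := fun _ _ => decidable_of_iff _ adj_iff_s13.symm

def translate (x : ZMod n × ZMod n) : Gamma n ≃g Gamma n where
  toEquiv := Equiv.addLeft x
  map_rel_iff' := by simp [adj_iff_sub_mem]

def swap : Gamma n ≃g Gamma n where
  toEquiv := Equiv.prodComm _ _
  map_rel_iff' {a b} := by
    simp only [Equiv.prodComm_apply, adj_iff_s13, Prod.fst_swap, Prod.snd_swap, ne_eq, Prod.swap_inj]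
    grind

def shear : Gamma n ≃g Gamma n where
  toFun p := (p.1, p.1 - p.2)
  invFun p := (p.1, p.1 - p.2)
  left_inv p := by simp
  right_inv p := by simp
  map_rel_iff' {a b} := by
    simp only [Equiv.coe_fn_mk, adj_iff_s13, ne_eq, Prod.ext_iff]
    grind

variable {t : ZMod n} {x u : ZMod n × ZMod n}

lemma mem_commonNeighbors_row (ht : t ≠ 0) :
    u ∈ (Gamma n).commonNeighbors 0 (t, 0) ↔
      (u.2 = 0 ∧ u.1 ≠ 0 ∧ u.1 ≠ t) ∨ u = (t, t) ∨ u = (0, -t) := by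
  obtain ⟨a, b⟩ := u
  simp only [mem_commonNeighbors, adj_iff_s13, ne_eq, Prod.ext_iff, Prod.fst_zero, Prod.snd_zero]
  grind

lemma isApex_row_iff (hn : 5 ≤ n) (ht : t ≠ 0) :
    (Gamma n).IsApex 0 (t, 0) u ↔ u = (t, t) ∨ u = (0, -t) := by
  constructor
  · rintro ⟨-, hu, hsub⟩
    refine ((mem_commonNeighbors_row ht).1 hu).resolve_left ?_
    rintro ⟨hu2, -, -⟩
    have : NeZero n := ⟨by omega⟩
    have mem : ∀ c ∉ ({0, t, u.1} : Finset (ZMod n)),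
        (c, 0) ∈ (Gamma n).neighborSet u ∩ (Gamma n).commonNeighbors 0 (t, 0) := by
      intro c hc
      simp only [Finset.mem_insert, Finset.mem_singleton, not_or] at hc
      refine ⟨adj_iff_s13.2 ?_, (mem_commonNeighbors_row ht).2 (Or.inl ⟨rfl, hc.1, hc.2.1⟩)⟩
      simp [Prod.ext_iff, hu2, Ne.symm hc.2.2]
    obtain ⟨d, hd, e, he, hde⟩ := Finset.exists_pair_notMem {0, t, u.1}
      (by grw [Finset.card_le_three, ZMod.card]; omega)
    exact hde (congrArg Prod.fst (hsub (mem d hd) (mem e he)))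
  · intro hu
    refine ⟨adj_iff_s13.2 (by simp [Prod.ext_iff, eq_comm, ht]),
      (mem_commonNeighbors_row ht).2 (Or.inr hu), ?_⟩
    have other_apex : ∀ v ∈ (Gamma n).neighborSet u ∩ (Gamma n).commonNeighbors 0 (t, 0),
        v ≠ u ∧ (v = (t, t) ∨ v = (0, -t)) := by
      rintro v ⟨huv : (Gamma n).Adj u v, hvc⟩
      refine ⟨huv.ne.symm, ((mem_commonNeighbors_row ht).1 hvc).resolve_left ?_⟩
      rw [adj_iff_s13] at huv
      rcases hu with rfl | rfl <;> grind
    intro v hv w hw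
    grind [other_apex v hv, other_apex w hw]

lemma isApex_translate_iff {s v : ZMod n × ZMod n} :
    (Gamma n).IsApex x (x + s) (x + v) ↔ (Gamma n).IsApex 0 s v := by
  simpa [translate] using (translate x).isApex_iff (x := 0) (y := s) (u := v)

lemma isApex_col_iff (hn : 5 ≤ n) (ht : t ≠ 0) :
    (Gamma n).IsApex 0 (0, t) u ↔ u = (t, t) ∨ u = (-t, 0) := by
  have h := (swap (n := n)).isApex_iff (x := 0) (y := (t, 0)) (u := u.swap)
  simp only [swap, RelIso.coe_fn_mk, Equiv.prodComm_apply, Prod.swap_zero, Prod.swap_prod_mk,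
    Prod.swap_swap] at h
  rw [h, isApex_row_iff hn ht]
  simp [Prod.ext_iff, and_comm]

lemma isApex_diag_iff (hn : 5 ≤ n) (ht : t ≠ 0) :
    (Gamma n).IsApex 0 (t, t) u ↔ u = (t, 0) ∨ u = (0, t) := by
  have h := (shear (n := n)).isApex_iff (x := 0) (y := (t, 0)) (u := (u.1, u.1 - u.2))
  simp only [shear, RelIso.coe_fn_mk, Equiv.coe_fn_mk, Prod.fst_zero, Prod.snd_zero, sub_self,
    Prod.mk_zero_zero, sub_zero, sub_sub_cancel, Prod.mk.eta] at h
  rw [h, isApex_row_iff hn ht]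
  grind [Prod.ext_iff]

lemma isApex_zero_mem_prod (hn : 5 ≤ n) {K : AddSubgroup (ZMod n)} {s v : ZMod n × ZMod n}
    (h : (Gamma n).IsApex 0 s v) (hs : s ∈ K.prod K) : v ∈ K.prod K := by
  obtain ⟨a, b⟩ := s
  obtain ⟨hne, hab⟩ := adj_iff_s13.1 h.1
  simp only [AddSubgroup.mem_prod] at hs ⊢
  rcases hab with hb | ha | hab
  · obtain rfl : b = 0 := hb.symm
    have ha : a ≠ 0 := by simpa [Prod.ext_iff, eq_comm] using hne
    rcases (isApex_row_iff hn ha).1 h with rfl | rfl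
    · exact ⟨hs.1, hs.1⟩
    · exact ⟨K.zero_mem, K.neg_mem hs.1⟩
  · obtain rfl : a = 0 := ha.symm
    have hb : b ≠ 0 := by simpa [Prod.ext_iff, eq_comm] using hne
    rcases (isApex_col_iff hn hb).1 h with rfl | rfl
    · exact ⟨hs.2, hs.2⟩
    · exact ⟨K.neg_mem hs.2, K.zero_mem⟩
  · obtain rfl : a = b := by simpa using hab
    have ha : a ≠ 0 := by simpa [Prod.ext_iff, eq_comm] using hne
    rcases (isApex_diag_iff hn ha).1 h with rfl | rfl
    · exact ⟨hs.1, K.zero_mem⟩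
    · exact ⟨K.zero_mem, hs.1⟩

lemma isApex_mem_prod (hn : 5 ≤ n) {K : AddSubgroup (ZMod n)} {y : ZMod n × ZMod n}
    (h : (Gamma n).IsApex x y u) (hx : x ∈ K.prod K) (hy : y ∈ K.prod K) : u ∈ K.prod K := by
  rw [← add_sub_cancel x y, ← add_sub_cancel x u, isApex_translate_iff] at h
  simpa using add_mem hx (isApex_zero_mem_prod hn h (sub_mem hy hx))

lemma apexClosure_diag_eq_univ (hn : 5 ≤ n) :
    (Gamma n).apexClosure {(0, 0), (1, 1)} = Set.univ := by
  have : Fact (1 < n) := ⟨by omega⟩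
  have h1 : (1 : ZMod n) ≠ 0 := one_ne_zero
  set C := (Gamma n).apexClosure {(0, 0), (1, 1)}
  suffices ∀ z, z ∈ C ∧ z + (1, 1) ∈ C from Set.eq_univ_of_forall fun z => (this z).1
  refine ZMod.prod_induction ⟨.mem (Or.inl rfl), .mem (by simp)⟩ ?_ ?_
  · rintro x ⟨hx, hx11⟩
    have h10 : x + (1, 0) ∈ C :=
      .apex hx hx11 (isApex_translate_iff.2 ((isApex_diag_iff hn h1).2 (Or.inl rfl)))
    refine ⟨h10, .apex h10 (show x + (1, 0) + (0, 1) ∈ C by simpa [add_assoc] using hx11) ?_⟩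
    exact isApex_translate_iff.2 ((isApex_col_iff hn h1).2 (Or.inl rfl))
  · rintro x ⟨hx, hx11⟩
    have h01 : x + (0, 1) ∈ C :=
      .apex hx hx11 (isApex_translate_iff.2 ((isApex_diag_iff hn h1).2 (Or.inr rfl)))
    refine ⟨h01, .apex h01 (show x + (0, 1) + (1, 0) ∈ C by simpa [add_assoc] using hx11) ?_⟩
    exact isApex_translate_iff.2 ((isApex_row_iff hn h1).2 (Or.inl rfl))

lemma trianglesExtendToK4_four_row :
    (Gamma 4).TrianglesExtendToK4 (0, 0) (((2 : ℕ) : ZMod 4), 0) := by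
  unfold TrianglesExtendToK4
  decide

lemma not_trianglesExtendToK4_four_diag : ¬ (Gamma 4).TrianglesExtendToK4 (0, 0) (1, 1) := by
  unfold TrianglesExtendToK4
  decide

end Gamma

/-- For composite `n` with a divisor `1 < m < n`, both
`{(0,0),(m,0)}` and `{(0,0),(1,1)}` are edges of `Γ(n)`, but no automorphism maps
the first edge onto the second. -/
theorem Gamma_edges_not_equivalent (n m : ℕ) (hn : 4 ≤ n) (hdvd : m ∣ n)
    (hm1 : 1 < m) (hmn : m < n) :
    (Gamma n).Adj (0, 0) ((m : ZMod n), 0) ∧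
    (Gamma n).Adj (0, 0) ((1 : ZMod n), 1) ∧
    ¬ ∃ f : Gamma n ≃g Gamma n,
        ({f (0, 0), f ((m : ZMod n), 0)} : Set (ZMod n × ZMod n)) =
          {(0, 0), (1, 1)} := by
  have hm0 : (m : ZMod n) ≠ 0 := by
    rw [Ne, ZMod.natCast_eq_zero_iff]
    exact Nat.not_dvd_of_pos_of_lt (by omega) hmn
  have : Fact (1 < n) := ⟨by omega⟩
  refine ⟨Gamma.adj_iff_s13.2 (by simp [Prod.ext_iff, hm0.symm]),
    Gamma.adj_iff_s13.2 (by simp [Prod.ext_iff]), ?_⟩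
  rintro ⟨f, hf⟩
  rcases hn.eq_or_lt with rfl | hn5
  · obtain rfl : m = 2 := by interval_cases m <;> simp_all
    have h := f.trianglesExtendToK4 Gamma.trianglesExtendToK4_four_row
    rcases Set.pair_eq_pair_iff.1 hf with ⟨h0, h2⟩ | ⟨h0, h2⟩ <;> rw [h0, h2] at h
    · exact Gamma.not_trianglesExtendToK4_four_diag h
    · exact Gamma.not_trianglesExtendToK4_four_diag h.symm
  · set K := AddSubgroup.zmultiples (m : ZMod n)
    have hsub : (Gamma n).apexClosure {(0, 0), ((m : ZMod n), 0)} ⊆ K.prod K :=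
      apexClosure_subset (by simp [Set.insert_subset_iff, AddSubgroup.mem_prod, K])
        fun x y u hx hy h => Gamma.isApex_mem_prod hn5 h hx hy
    have himage : f '' (Gamma n).apexClosure {(0, 0), ((m : ZMod n), 0)} = Set.univ := by
      rw [f.image_apexClosure, Set.image_pair, hf, Gamma.apexClosure_diag_eq_univ hn5]
    have h10 : f (1, 0) ∈ f '' (Gamma n).apexClosure {(0, 0), ((m : ZMod n), 0)} :=
      himage ▸ Set.mem_univ _
    exact ZMod.one_notMem_zmultiples_natCast hdvd hm1
      (AddSubgroup.mem_prod.1 (hsub (f.injective.mem_set_image.1 h10))).1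
end

section
/- The graph Γ(5) is not 2-arc-transitive: there exist 2-arcs (u₀, u₁, u₂) and (v₀, v₁, v₂) of Γ(5) such that no automorphism f of Γ(5) satisfies f(u₀) = v₀, f(u₁) = v₁ and f(u₂) = v₂. In particular, ((0,0), (0,1), (2,3)) and ((0,0), (2,2), (4,2)) are both 2-arcs of Γ(5), and no automorphism of Γ(5) maps the first to the second. -/
instance (n : ℕ) : DecidableRel (Gamma n).Adj := fun x y =>
  inferInstanceAs (Decidable (x ≠ y ∧ (x - y ≠ 0 ∧
    ((x - y).2 = 0 ∨ (x - y).1 = 0 ∨ (x - y).1 = (x - y).2))))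

open Finset

namespace SimpleGraph.Iso

variable {V W : Type*} [Fintype V] [Fintype W] [DecidableEq W] {G : SimpleGraph V}
  {H : SimpleGraph W} [DecidableRel G.Adj] [DecidableRel H.Adj]

theorem image_filter_forall_adj (f : G ≃g H) (s : Finset V) :
    ({x | ∀ v ∈ s, G.Adj v x} : Finset V).image f =
      ({y | ∀ w ∈ s.image f, H.Adj w y} : Finset W) := by
  ext y
  obtain ⟨x, rfl⟩ := f.surjective y
  simp [f.map_adj_iff]

theorem card_filter_forall_adj (f : G ≃g H) (s : Finset V) :
    #{x | ∀ v ∈ s, G.Adj v x} = #{y | ∀ w ∈ s.image f, H.Adj w y} := by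
  rw [← f.image_filter_forall_adj, card_image_of_injective _ f.injective]

end SimpleGraph.Iso

/-- `Γ(5)` is not 2-arc-transitive: there exist 2-arcs no automorphism
maps one to the other; in particular `((0,0),(0,1),(2,3))` and `((0,0),(2,2),(4,2))` are
2-arcs of `Γ(5)` not related by any automorphism. -/
theorem Gamma5_not_two_arc_transitive :
    (∃ u₀ u₁ u₂ v₀ v₁ v₂ : ZMod 5 × ZMod 5,
      (Gamma 5).Adj u₀ u₁ ∧ (Gamma 5).Adj u₁ u₂ ∧ u₀ ≠ u₂ ∧
      (Gamma 5).Adj v₀ v₁ ∧ (Gamma 5).Adj v₁ v₂ ∧ v₀ ≠ v₂ ∧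
      ¬ ∃ f : Gamma 5 ≃g Gamma 5, f u₀ = v₀ ∧ f u₁ = v₁ ∧ f u₂ = v₂) ∧
    (Gamma 5).Adj (0, 0) (0, 1) ∧ (Gamma 5).Adj (0, 1) (2, 3) ∧
      ((0, 0) : ZMod 5 × ZMod 5) ≠ (2, 3) ∧
    (Gamma 5).Adj (0, 0) (2, 2) ∧ (Gamma 5).Adj (2, 2) (4, 2) ∧
      ((0, 0) : ZMod 5 × ZMod 5) ≠ (4, 2) ∧
    ¬ ∃ f : Gamma 5 ≃g Gamma 5,
        f (0, 0) = (0, 0) ∧ f (0, 1) = (2, 2) ∧ f (2, 3) = (4, 2) := by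
  have not_mapped : ¬ ∃ f : Gamma 5 ≃g Gamma 5,
      f (0, 0) = (0, 0) ∧ f (0, 1) = (2, 2) ∧ f (2, 3) = (4, 2) := by
    rintro ⟨f, h₀, h₁, h₂⟩
    have hcard := f.card_filter_forall_adj ({(0, 0), (0, 1), (2, 3)} : Finset (ZMod 5 × ZMod 5))
    simp only [image_insert, image_singleton, h₀, h₁, h₂] at hcard
    exact absurd hcard (by decide)
  exact ⟨⟨(0, 0), (0, 1), (2, 3), (0, 0), (2, 2), (4, 2), by decide, by decide, by decide,
    by decide, by decide, by decide, not_mapped⟩,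
    by decide, by decide, by decide, by decide, by decide, by decide, not_mapped⟩
end
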